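/- Assume BND, HBC, ICO, OBJ and LIN. Then for every θ ∈ [0,1], every μ > 0, every multiplier vector λ, and every point x lying strictly between its bounds, the Hessian ∇²_{xx} L_μ(x,λ,θ) is block diagonal with respect to the splitting x = (x_hyd, x_oth): the mixed block ∇²_{x_hyd x_oth} L_μ vanishes, and the block ∇²_{x_oth x_oth} L_μ is a diagonal matrix all of whose diagonal entries are strictly positive (in particular it is nonsingular). -/

import Mathlib

/-- Index type for the interior hydraulic variables:
`Sum.inl (k, m)` is the interior level variable `H_{k+2}(t_{m+1})` (`2 ≤ k+2 ≤ N`),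
`Sum.inr (k, m)` is the interior discharge variable `Q_{k+1}(t_{m+1})` (`1 ≤ k+1 ≤ N-1`). -/
abbrev HydIdx (N T : ℕ) : Type := (Fin (N - 1) × Fin T) ⊕ (Fin (N - 1) × Fin T)

/-- Index type for the full optimization variable `x = (x_hyd, x_oth)`. -/
abbrev OptIdx (N T : ℕ) (ιoth : Type) : Type := HydIdx N T ⊕ ιoth

/-- Index type for the equality constraints: hydraulic residuals plus affine constraints. -/
abbrev ConIdx (N T : ℕ) (κ : Type) : Type := HydIdx N T ⊕ κ

/-- Smooth absolute value `⟨x⟩ = √(x² + ε)`. -/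
noncomputable def sabs (ε x : ℝ) : ℝ := Real.sqrt (x ^ 2 + ε)

/-- Physical parameters and fixed data of the discretized inertial-wave model on a staggered
1D grid, with fixed boundary levels and fixed initial values substituted in.  `qN j` is the
index, within `x_oth`, of the boundary discharge variable `Q_N(t_{j+1})`. -/
structure HydData (N T : ℕ) (ιoth : Type) where
  g : ℝ
  w : ℝ
  Hb : ℝ
  dx : ℝ
  dt : ℝ
  C : ℝ
  eps : ℝ
  Abar : ℝ
  Pbar : ℝ
  Qbar : ℝ
  H0 : ℕ → ℝ
  Hbd : ℕ → ℝ
  Q0 : ℕ → ℝ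
  qN : Fin T → ιoth

namespace HydData

variable {N T : ℕ} {ιoth : Type} (P : HydData N T ιoth)

/-- The level value `H_i(t_j)` (`1 ≤ i ≤ N`, `0 ≤ j ≤ T`): fixed initial value at `j = 0`,
fixed boundary value at `i = 1`, interior optimization variable otherwise. -/
noncomputable def Hval (x : OptIdx N T ιoth → ℝ) (i j : ℕ) : ℝ :=
  if j = 0 then P.H0 i
  else if i ≤ 1 then P.Hbd j
  else if h : i - 2 < N - 1 ∧ j - 1 < T then
    x (Sum.inl (Sum.inl (⟨i - 2, h.1⟩, ⟨j - 1, h.2⟩))) else 0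

/-- The discharge value `Q_i(t_j)` (`1 ≤ i ≤ N`, `0 ≤ j ≤ T`): fixed initial value at
`j = 0`, the boundary discharge variable (in `x_oth`) at `i = N`, interior optimization
variable otherwise. -/
noncomputable def Qval (x : OptIdx N T ιoth → ℝ) (i j : ℕ) : ℝ :=
  if j = 0 then P.Q0 i
  else if N ≤ i then (if h : j - 1 < T then x (Sum.inr (P.qN ⟨j - 1, h⟩)) else 0)
  else if h : i - 1 < N - 1 ∧ j - 1 < T then
    x (Sum.inl (Sum.inr (⟨i - 1, h.1⟩, ⟨j - 1, h.2⟩))) else 0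

/-- Cross section `A_{i+1/2}(t_j) = (w/2)(H_i(t_j) + H_{i+1}(t_j) - 2 H_b)`. -/
noncomputable def Aval (x : OptIdx N T ιoth → ℝ) (i j : ℕ) : ℝ :=
  P.w / 2 * (P.Hval x i j + P.Hval x (i + 1) j - 2 * P.Hb)

/-- Wetted perimeter `P_{i+1/2}(t_j) = w + H_i(t_j) + H_{i+1}(t_j) - 2 H_b`. -/
noncomputable def Pval (x : OptIdx N T ιoth → ℝ) (i j : ℕ) : ℝ :=
  P.w + P.Hval x i j + P.Hval x (i + 1) j - 2 * P.Hb

/-- Mass-balance residual `c_{i,j}` (`2 ≤ i ≤ N`, `1 ≤ j ≤ T`). -/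
noncomputable def massRes (x : OptIdx N T ιoth → ℝ) (i j : ℕ) : ℝ :=
  (P.Qval x i j - P.Qval x (i - 1) j) / P.dx
    + P.w * (P.Hval x i j - P.Hval x i (j - 1)) / P.dt

/-- Momentum residual `d_{i,j}` (`1 ≤ i ≤ N-1`, `1 ≤ j ≤ T`) at homotopy parameter `θ`. -/
noncomputable def momRes (θ : ℝ) (x : OptIdx N T ιoth → ℝ) (i j : ℕ) : ℝ :=
  (P.Qval x i j - P.Qval x i (j - 1)) / P.dt
    + P.g * (θ * P.Aval x i j + (1 - θ) * P.Abar)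
        * (P.Hval x (i + 1) j - P.Hval x i j) / P.dx
    + P.g * (θ * P.Pval x i (j - 1) * sabs P.eps (P.Qval x i j) / P.Aval x i (j - 1) ^ 2
          + (1 - θ) * P.Pbar * sabs P.eps P.Qbar / P.Abar ^ 2)
        * P.Qval x i j / P.C ^ 2

/-- The family of hydraulic residuals: `Sum.inl (k, m) ↦ c_{k+2, m+1}` and
`Sum.inr (k, m) ↦ d_{k+1, m+1}`. -/
noncomputable def hydRes (θ : ℝ) (r : HydIdx N T) (x : OptIdx N T ιoth → ℝ) : ℝ :=
  match r with
  | Sum.inl (k, m) => P.massRes x ((k : ℕ) + 2) ((m : ℕ) + 1)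
  | Sum.inr (k, m) => P.momRes θ x ((k : ℕ) + 1) ((m : ℕ) + 1)

end HydData

/-- Data of the parametric barrier optimization problem: quadratic/linear objective terms,
variable bounds, and the coefficients of the additional affine constraints. -/
structure OptData (ι κ : Type) where
  K : Finset ι
  L : Finset ι
  a : ι → ℝ
  b : ι → ℝ
  IL : Finset ι
  IU : Finset ι
  xL : ι → ℝ
  xU : ι → ℝ
  Ac : κ → ℝ → ι → ℝ
  bc : κ → ℝ → ℝ

section OptProblem

variable {N T : ℕ} {ιoth κ : Type} [Fintype ιoth] [DecidableEq ιoth] [Fintype κ]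

/-- The objective `f(x,θ) = f_hyd(x_hyd,θ) + Σ_{k∈K} a_k x_k² + Σ_{l∈L} b_l x_l`. -/
noncomputable def objective (D : OptData (OptIdx N T ιoth) κ)
    (fhyd : (HydIdx N T → ℝ) → ℝ → ℝ) (x : OptIdx N T ιoth → ℝ) (θ : ℝ) : ℝ :=
  fhyd (x ∘ Sum.inl) θ + ∑ k ∈ D.K, D.a k * x k ^ 2 + ∑ l ∈ D.L, D.b l * x l

/-- The equality constraint `c_m(x,θ)`: a hydraulic residual for `m = Sum.inl r` and an
affine constraint for `m = Sum.inr k`. -/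
noncomputable def constraintFun (P : HydData N T ιoth) (D : OptData (OptIdx N T ιoth) κ)
    (θ : ℝ) (m : ConIdx N T κ) (x : OptIdx N T ιoth → ℝ) : ℝ :=
  match m with
  | Sum.inl r => P.hydRes θ r x
  | Sum.inr k => (∑ i, D.Ac k θ i * x i) + D.bc k θ

/-- The barrier Lagrangian
`L_μ(x,λ,θ) = f(x,θ) - μ Σ_{k∈IL} ln(x_k - x_{L,k}) - μ Σ_{k∈IU} ln(x_{U,k} - x_k) + λᵀ c(x,θ)`. -/
noncomputable def lagrangian (P : HydData N T ιoth) (D : OptData (OptIdx N T ιoth) κ)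
    (fhyd : (HydIdx N T → ℝ) → ℝ → ℝ) (μ θ : ℝ)
    (x : OptIdx N T ιoth → ℝ) (lam : ConIdx N T κ → ℝ) : ℝ :=
  objective D fhyd x θ
    - μ * ∑ k ∈ D.IL, Real.log (x k - D.xL k)
    - μ * ∑ k ∈ D.IU, Real.log (D.xU k - x k)
    + ∑ m, lam m * constraintFun P D θ m x

/-- The gradient `∇_x L_μ(x,λ,θ)`, represented by its components. -/
noncomputable def gradLag (P : HydData N T ιoth) (D : OptData (OptIdx N T ιoth) κ)
    (fhyd : (HydIdx N T → ℝ) → ℝ → ℝ) (μ θ : ℝ)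
    (x : OptIdx N T ιoth → ℝ) (lam : ConIdx N T κ → ℝ) : OptIdx N T ιoth → ℝ :=
  fun k => fderiv ℝ (fun y => lagrangian P D fhyd μ θ y lam) x (Pi.single k 1)

/-- The Hessian entry `(∇²_{xx} L_μ(x,λ,θ))_{k₁ k₂}`. -/
noncomputable def hessLag (P : HydData N T ιoth) (D : OptData (OptIdx N T ιoth) κ)
    (fhyd : (HydIdx N T → ℝ) → ℝ → ℝ) (μ θ : ℝ)
    (x : OptIdx N T ιoth → ℝ) (lam : ConIdx N T κ → ℝ) (k₁ k₂ : OptIdx N T ιoth) : ℝ :=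
  fderiv ℝ
    (fun y => fderiv ℝ (fun z => lagrangian P D fhyd μ θ z lam) y (Pi.single k₂ 1))
    x (Pi.single k₁ 1)

/-- The primal residual map `F_μ(x,λ,θ) = (∇_x L_μ(x,λ,θ), c(x,θ))`. -/
noncomputable def primalRes (P : HydData N T ιoth) (D : OptData (OptIdx N T ιoth) κ)
    (fhyd : (HydIdx N T → ℝ) → ℝ → ℝ) (μ θ : ℝ)
    (p : (OptIdx N T ιoth → ℝ) × (ConIdx N T κ → ℝ)) :
    (OptIdx N T ιoth → ℝ) × (ConIdx N T κ → ℝ) :=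
  (gradLag P D fhyd μ θ p.1 p.2, fun m => constraintFun P D θ m p.1)

end OptProblem
section Helpers

open Filter Topology

variable {N T : ℕ} {ιoth : Type} [Fintype ιoth]

lemma myDiff_div_const {E : Type*} [NormedAddCommGroup E] [NormedSpace ℝ E] {f : E → ℝ}
    (h : Differentiable ℝ f) (d : ℝ) : Differentiable ℝ (fun x => f x / d) := by
  simp only [div_eq_mul_inv]; exact h.mul_const _

lemma myDiffAt_div_const {E : Type*} [NormedAddCommGroup E] [NormedSpace ℝ E] {f : E → ℝ}
    {x : E} (h : DifferentiableAt ℝ f x) (d : ℝ) :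
    DifferentiableAt ℝ (fun x => f x / d) x := by
  simp only [div_eq_mul_inv]; exact h.mul_const _

lemma diff_Hval (P : HydData N T ιoth) (i j : ℕ) :
    Differentiable ℝ (fun y : OptIdx N T ιoth → ℝ => P.Hval y i j) := by
  unfold HydData.Hval
  by_cases h1 : j = 0
  · simp only [h1, if_pos rfl]; exact differentiable_const _
  by_cases h2 : i ≤ 1
  · simp only [if_neg h1, if_pos h2]; exact differentiable_const _
  by_cases h3 : i - 2 < N - 1 ∧ j - 1 < T
  · simp only [if_neg h1, if_neg h2, dif_pos h3]; exact differentiable_apply _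
  · simp only [if_neg h1, if_neg h2, dif_neg h3]; exact differentiable_const _

lemma diff_Qval (P : HydData N T ιoth) (i j : ℕ) :
    Differentiable ℝ (fun y : OptIdx N T ιoth → ℝ => P.Qval y i j) := by
  unfold HydData.Qval
  by_cases h1 : j = 0
  · simp only [h1, if_pos rfl]; exact differentiable_const _
  by_cases h2 : N ≤ i
  · simp only [if_neg h1, if_pos h2]
    by_cases h3 : j - 1 < T
    · simp only [dif_pos h3]; exact differentiable_apply _
    · simp only [dif_neg h3]; exact differentiable_const _
  by_cases h3 : i - 1 < N - 1 ∧ j - 1 < T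
  · simp only [if_neg h1, if_neg h2, dif_pos h3]; exact differentiable_apply _
  · simp only [if_neg h1, if_neg h2, dif_neg h3]; exact differentiable_const _

lemma diff_Aval (P : HydData N T ιoth) (i j : ℕ) :
    Differentiable ℝ (fun y : OptIdx N T ιoth → ℝ => P.Aval y i j) := by
  unfold HydData.Aval
  exact (((diff_Hval P i j).add (diff_Hval P (i+1) j)).sub (differentiable_const _)).const_mul _

lemma diff_Pval (P : HydData N T ιoth) (i j : ℕ) :
    Differentiable ℝ (fun y : OptIdx N T ιoth → ℝ => P.Pval y i j) := by
  unfold HydData.Pval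
  exact (((differentiable_const _).add (diff_Hval P i j)).add (diff_Hval P (i+1) j)).sub
    (differentiable_const _)

lemma diff_sabs_Qval (P : HydData N T ιoth) (heps : 0 < P.eps) (i j : ℕ) :
    Differentiable ℝ (fun y : OptIdx N T ιoth → ℝ => sabs P.eps (P.Qval y i j)) := by
  intro y
  have h1 : DifferentiableAt ℝ (fun y : OptIdx N T ιoth → ℝ => (P.Qval y i j) ^ 2 + P.eps) y :=
    ((diff_Qval P i j y).pow 2).add_const P.eps
  have h2 : (P.Qval y i j) ^ 2 + P.eps ≠ 0 := by positivity
  exact h1.sqrt h2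

lemma diff_massRes (P : HydData N T ιoth) (i j : ℕ) :
    Differentiable ℝ (fun y : OptIdx N T ιoth → ℝ => P.massRes y i j) := by
  unfold HydData.massRes
  exact (myDiff_div_const ((diff_Qval P i j).sub (diff_Qval P (i-1) j)) _).add
    (myDiff_div_const (((diff_Hval P i j).sub (diff_Hval P i (j-1))).const_mul _) _)

lemma diffAt_momRes (P : HydData N T ιoth) (heps : 0 < P.eps) (θ' : ℝ) (i j : ℕ)
    (y : OptIdx N T ιoth → ℝ) (hA : P.Aval y i (j-1) ≠ 0) :
    DifferentiableAt ℝ (fun y => P.momRes θ' y i j) y := by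
  unfold HydData.momRes
  have d1 : DifferentiableAt ℝ
      (fun y : OptIdx N T ιoth → ℝ => (P.Qval y i j - P.Qval y i (j-1)) / P.dt) y :=
    myDiffAt_div_const ((diff_Qval P i j y).sub (diff_Qval P i (j-1) y)) P.dt
  have d2 : DifferentiableAt ℝ (fun y : OptIdx N T ιoth → ℝ =>
      P.g * (θ' * P.Aval y i j + (1 - θ') * P.Abar) * (P.Hval y (i+1) j - P.Hval y i j) / P.dx) y := by
    exact myDiffAt_div_const (((((diff_Aval P i j y).const_mul θ').add_const ((1-θ')*P.Abar)).const_mul P.g).mul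
      ((diff_Hval P (i+1) j y).sub (diff_Hval P i j y))) _
  have d3 : DifferentiableAt ℝ (fun y : OptIdx N T ιoth → ℝ =>
      P.g * (θ' * P.Pval y i (j-1) * sabs P.eps (P.Qval y i j) / P.Aval y i (j-1) ^ 2
        + (1 - θ') * P.Pbar * sabs P.eps P.Qbar / P.Abar ^ 2) * P.Qval y i j / P.C ^ 2) y := by
    have hden : DifferentiableAt ℝ (fun y : OptIdx N T ιoth → ℝ => P.Aval y i (j-1) ^ 2) y :=
      (diff_Aval P i (j-1) y).pow 2
    have hnum : DifferentiableAt ℝ (fun y : OptIdx N T ιoth → ℝ =>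
        θ' * P.Pval y i (j-1) * sabs P.eps (P.Qval y i j)) y :=
      ((diff_Pval P i (j-1) y).const_mul θ').mul (diff_sabs_Qval P heps i j y)
    have hfrac : DifferentiableAt ℝ (fun y : OptIdx N T ιoth → ℝ =>
        θ' * P.Pval y i (j-1) * sabs P.eps (P.Qval y i j) / P.Aval y i (j-1) ^ 2) y := by
      simp only [div_eq_mul_inv]
      exact hnum.mul (hden.inv (pow_ne_zero 2 hA))
    exact myDiffAt_div_const (((hfrac.add_const _).const_mul P.g).mul (diff_Qval P i j y)) _
  exact (d1.add d2).add d3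

end Helpers
section Helpers2

variable {N T : ℕ} {ιoth κ : Type} [Fintype ιoth] [DecidableEq ιoth] [Fintype κ]

/-- Extension of a hydraulic vector by zero on the other variables. -/
noncomputable def auxExt {N T : ℕ} {ιoth : Type} (z : HydIdx N T → ℝ) :
    OptIdx N T ιoth → ℝ := Sum.elim z 0

/-- The single-coordinate part of the Lagrangian in the coordinate `Sum.inr k`. -/
noncomputable def auxH (P : HydData N T ιoth) (D : OptData (OptIdx N T ιoth) κ)
    (lam : ConIdx N T κ → ℝ) (μ θ : ℝ) (k : ιoth) (t : ℝ) : ℝ :=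
  (if Sum.inr k ∈ D.K then D.a (Sum.inr k) * t ^ 2 else 0)
  + (if Sum.inr k ∈ D.L then D.b (Sum.inr k) * t else 0)
  - μ * (if Sum.inr k ∈ D.IL then Real.log (t - D.xL (Sum.inr k)) else 0)
  - μ * (if Sum.inr k ∈ D.IU then Real.log (D.xU (Sum.inr k) - t) else 0)
  + (∑ m : κ, lam (Sum.inr m) * D.Ac m θ (Sum.inr k)) * t
  + (∑ r : Fin (N - 1) × Fin T,
      lam (Sum.inl (Sum.inl r)) * (if N ≤ (r.1 : ℕ) + 2 ∧ P.qN r.2 = k then 1 else 0)) / P.dx * t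

lemma aux_Hval_pi (P : HydData N T ιoth) (y : OptIdx N T ιoth → ℝ) (i j : ℕ) :
    P.Hval (auxExt (fun kh => y (Sum.inl kh))) i j = P.Hval y i j := by
  unfold HydData.Hval auxExt
  by_cases h1 : j = 0
  · simp [h1]
  by_cases h2 : i ≤ 1
  · simp [h1, h2]
  by_cases h3 : i - 2 < N - 1 ∧ j - 1 < T
  · simp [h1, h2, h3]
  · simp [h1, h2, h3]

lemma aux_Qval_pi (P : HydData N T ιoth) (y : OptIdx N T ιoth → ℝ) (i j : ℕ) (hiN : i < N) :
    P.Qval (auxExt (fun kh => y (Sum.inl kh))) i j = P.Qval y i j := by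
  unfold HydData.Qval auxExt
  have h2 : ¬ N ≤ i := by omega
  by_cases h1 : j = 0
  · simp [h1]
  by_cases h3 : i - 1 < N - 1 ∧ j - 1 < T
  · simp [h1, h2, h3]
  · simp [h1, h2, h3]

lemma aux_Aval_pi (P : HydData N T ιoth) (y : OptIdx N T ιoth → ℝ) (i j : ℕ) :
    P.Aval (auxExt (fun kh => y (Sum.inl kh))) i j = P.Aval y i j := by
  unfold HydData.Aval
  rw [aux_Hval_pi, aux_Hval_pi]

lemma aux_Pval_pi (P : HydData N T ιoth) (y : OptIdx N T ιoth → ℝ) (i j : ℕ) :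
    P.Pval (auxExt (fun kh => y (Sum.inl kh))) i j = P.Pval y i j := by
  unfold HydData.Pval
  rw [aux_Hval_pi, aux_Hval_pi]

lemma aux_mom_pi (P : HydData N T ιoth) (θ : ℝ) (y : OptIdx N T ιoth → ℝ) (i j : ℕ)
    (hiN : i < N) :
    P.momRes θ (auxExt (fun kh => y (Sum.inl kh))) i j = P.momRes θ y i j := by
  unfold HydData.momRes
  rw [aux_Qval_pi _ _ _ _ hiN, aux_Qval_pi _ _ _ _ hiN, aux_Hval_pi, aux_Hval_pi,
    aux_Aval_pi, aux_Aval_pi, aux_Pval_pi]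

lemma aux_mass_diff (P : HydData N T ιoth) (y : OptIdx N T ιoth → ℝ)
    (k : Fin (N - 1)) (m : Fin T) :
    P.massRes y ((k : ℕ) + 2) ((m : ℕ) + 1)
      - P.massRes (auxExt (fun kh => y (Sum.inl kh))) ((k : ℕ) + 2) ((m : ℕ) + 1)
    = if N ≤ (k : ℕ) + 2 then y (Sum.inr (P.qN m)) / P.dx else 0 := by
  have hk1 : (k : ℕ) + 2 - 1 < N := by have := k.isLt; omega
  unfold HydData.massRes
  rw [aux_Hval_pi, aux_Hval_pi, aux_Qval_pi _ _ _ _ hk1]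
  by_cases hN2 : N ≤ (k : ℕ) + 2
  · have hQy : P.Qval y ((k : ℕ) + 2) ((m : ℕ) + 1) = y (Sum.inr (P.qN m)) := by
      unfold HydData.Qval
      simp [hN2, m.isLt]
    have hQz : P.Qval (auxExt (ιoth := ιoth) (fun kh => y (Sum.inl kh))) ((k : ℕ) + 2)
        ((m : ℕ) + 1) = 0 := by
      unfold HydData.Qval auxExt
      simp [hN2, m.isLt]
    rw [hQy, hQz, if_pos hN2]
    ring
  · rw [aux_Qval_pi _ _ _ _ (by omega), if_neg hN2]
    ring

lemma aux_sum_split (s : Finset (OptIdx N T ιoth)) (g : OptIdx N T ιoth → ℝ → ℝ)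
    (y : OptIdx N T ιoth → ℝ) :
    (∑ k ∈ s, g k (y k)) - (∑ k ∈ s, g k (auxExt (fun kh => y (Sum.inl kh)) k))
      = ∑ kk : ιoth,
          (if Sum.inr kk ∈ s then g (Sum.inr kk) (y (Sum.inr kk)) - g (Sum.inr kk) 0 else 0) := by
  classical
  rw [← Finset.sum_sub_distrib]
  have h1 : (∑ k ∈ s, (g k (y k) - g k (auxExt (fun kh => y (Sum.inl kh)) k)))
      = ∑ k : OptIdx N T ιoth,
          (if k ∈ s then g k (y k) - g k (auxExt (fun kh => y (Sum.inl kh)) k) else 0) := by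
    rw [Finset.sum_ite_mem, Finset.univ_inter]
  rw [h1, Fintype.sum_sum_type]
  have h2 : ∀ kh : HydIdx N T,
      (if Sum.inl kh ∈ s then
        g (Sum.inl kh) (y (Sum.inl kh))
          - g (Sum.inl kh) (auxExt (ιoth := ιoth) (fun kh => y (Sum.inl kh)) (Sum.inl kh))
       else 0) = 0 := by
    intro kh
    simp [auxExt]
  simp only [h2, Finset.sum_const_zero, zero_add]
  rfl

lemma aux_mass_swap (P : HydData N T ιoth) (lam : ConIdx N T κ → ℝ)
    (y : OptIdx N T ιoth → ℝ) :
    (∑ r : Fin (N - 1) × Fin T, lam (Sum.inl (Sum.inl r)) *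
        (if N ≤ (r.1 : ℕ) + 2 then y (Sum.inr (P.qN r.2)) / P.dx else 0))
      = ∑ k : ιoth, (∑ r : Fin (N - 1) × Fin T, lam (Sum.inl (Sum.inl r)) *
          (if N ≤ (r.1 : ℕ) + 2 ∧ P.qN r.2 = k then 1 else 0)) / P.dx * y (Sum.inr k) := by
  classical
  simp only [Finset.sum_div, Finset.sum_mul]
  rw [Finset.sum_comm]
  apply Finset.sum_congr rfl
  intro r _
  by_cases hc : N ≤ (r.1 : ℕ) + 2
  · have he : ∀ k : ιoth,
        lam (Sum.inl (Sum.inl r)) * (if N ≤ (r.1 : ℕ) + 2 ∧ P.qN r.2 = k then 1 else 0) / P.dx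
          * y (Sum.inr k)
        = if P.qN r.2 = k then lam (Sum.inl (Sum.inl r)) * (y (Sum.inr k) / P.dx) else 0 := by
      intro k
      by_cases hk : P.qN r.2 = k
      · simp [hk, hc]; ring
      · simp [hk]
    simp only [he]
    rw [Finset.sum_ite_eq]
    simp [hc]
  · simp [hc]

lemma aux_affine_swap (D : OptData (OptIdx N T ιoth) κ) (lam : ConIdx N T κ → ℝ) (θ : ℝ)
    (y : OptIdx N T ιoth → ℝ) :
    (∑ m : κ, lam (Sum.inr m) * ∑ k : ιoth, D.Ac m θ (Sum.inr k) * y (Sum.inr k))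
      = ∑ k : ιoth, (∑ m : κ, lam (Sum.inr m) * D.Ac m θ (Sum.inr k)) * y (Sum.inr k) := by
  simp only [Finset.mul_sum, Finset.sum_mul, mul_assoc]
  exact Finset.sum_comm

end Helpers2
section Helpers3

set_option linter.unusedSectionVars false

variable {N T : ℕ} {ιoth κ : Type} [Fintype ιoth] [DecidableEq ιoth] [Fintype κ]

lemma aux_decomp (P : HydData N T ιoth) (D : OptData (OptIdx N T ιoth) κ)
    (fhyd : (HydIdx N T → ℝ) → ℝ → ℝ) (μ θ : ℝ) (lam : ConIdx N T κ → ℝ)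
    (y : OptIdx N T ιoth → ℝ) :
    lagrangian P D fhyd μ θ y lam
      = (lagrangian P D fhyd μ θ (auxExt (fun kh => y (Sum.inl kh))) lam
          - ∑ k : ιoth, auxH P D lam μ θ k 0)
        + ∑ k : ιoth, auxH P D lam μ θ k (y (Sum.inr k)) := by
  classical
  have hcon : (∑ m : ConIdx N T κ, lam m * constraintFun P D θ m y)
      - (∑ m : ConIdx N T κ,
          lam m * constraintFun P D θ m (auxExt (fun kh => y (Sum.inl kh))))
      = ∑ k : ιoth,
          ((∑ r : Fin (N - 1) × Fin T, lam (Sum.inl (Sum.inl r)) *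
              (if N ≤ (r.1 : ℕ) + 2 ∧ P.qN r.2 = k then 1 else 0)) / P.dx * y (Sum.inr k)
            + (∑ m : κ, lam (Sum.inr m) * D.Ac m θ (Sum.inr k)) * y (Sum.inr k)) := by
    rw [← Finset.sum_sub_distrib]
    simp only [← mul_sub]
    rw [Fintype.sum_sum_type, Fintype.sum_sum_type]
    have hmass : (∑ r : Fin (N - 1) × Fin T,
        lam (Sum.inl (Sum.inl r)) * (constraintFun P D θ (Sum.inl (Sum.inl r)) y
          - constraintFun P D θ (Sum.inl (Sum.inl r)) (auxExt (fun kh => y (Sum.inl kh)))))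
        = ∑ r : Fin (N - 1) × Fin T, lam (Sum.inl (Sum.inl r)) *
            (if N ≤ (r.1 : ℕ) + 2 then y (Sum.inr (P.qN r.2)) / P.dx else 0) := by
      apply Finset.sum_congr rfl
      rintro ⟨k, m⟩ -
      congr 1
      show P.massRes y ((k : ℕ) + 2) ((m : ℕ) + 1)
          - P.massRes (auxExt (fun kh => y (Sum.inl kh))) ((k : ℕ) + 2) ((m : ℕ) + 1) = _
      exact aux_mass_diff P y k m
    have hmom : (∑ r : Fin (N - 1) × Fin T,
        lam (Sum.inl (Sum.inr r)) * (constraintFun P D θ (Sum.inl (Sum.inr r)) y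
          - constraintFun P D θ (Sum.inl (Sum.inr r)) (auxExt (fun kh => y (Sum.inl kh)))))
        = 0 := by
      apply Finset.sum_eq_zero
      rintro ⟨k, m⟩ -
      have h : constraintFun P D θ (Sum.inl (Sum.inr (k, m)))
            (auxExt (fun kh => y (Sum.inl kh)))
          = constraintFun P D θ (Sum.inl (Sum.inr (k, m))) y := by
        show P.momRes θ (auxExt (fun kh => y (Sum.inl kh))) ((k : ℕ) + 1) ((m : ℕ) + 1)
            = P.momRes θ y ((k : ℕ) + 1) ((m : ℕ) + 1)
        exact aux_mom_pi P θ y ((k : ℕ) + 1) ((m : ℕ) + 1) (by have := k.isLt; omega)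
      rw [h, sub_self, mul_zero]
    have haff : (∑ mk : κ,
        lam (Sum.inr mk) * (constraintFun P D θ (Sum.inr mk) y
          - constraintFun P D θ (Sum.inr mk) (auxExt (fun kh => y (Sum.inl kh)))))
        = ∑ mk : κ, lam (Sum.inr mk) * ∑ k : ιoth, D.Ac mk θ (Sum.inr k) * y (Sum.inr k) := by
      apply Finset.sum_congr rfl
      intro mk _
      congr 1
      show ((∑ i, D.Ac mk θ i * y i) + D.bc mk θ)
          - ((∑ i, D.Ac mk θ i * auxExt (fun kh => y (Sum.inl kh)) i) + D.bc mk θ) = _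
      have hs := aux_sum_split (ιoth := ιoth) Finset.univ (fun i t => D.Ac mk θ i * t) y
      simp only [Finset.mem_univ, if_true, mul_zero, sub_zero] at hs
      calc ((∑ i, D.Ac mk θ i * y i) + D.bc mk θ)
            - ((∑ i, D.Ac mk θ i * auxExt (fun kh => y (Sum.inl kh)) i) + D.bc mk θ)
          = (∑ i, D.Ac mk θ i * y i)
            - (∑ i, D.Ac mk θ i * auxExt (fun kh => y (Sum.inl kh)) i) := by ring
        _ = _ := hs
    rw [hmass, hmom, haff, aux_mass_swap, aux_affine_swap, add_zero,
      ← Finset.sum_add_distrib]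
  have e1 := aux_sum_split D.K (fun k t => D.a k * t ^ 2) y
  have e2 := aux_sum_split D.L (fun k t => D.b k * t) y
  have e3 := aux_sum_split D.IL (fun k t => Real.log (t - D.xL k)) y
  have e4 := aux_sum_split D.IU (fun k t => Real.log (D.xU k - t)) y
  have e5 : fhyd (auxExt (ιoth := ιoth) (fun kh => y (Sum.inl kh)) ∘ Sum.inl) θ
      = fhyd (y ∘ Sum.inl) θ := rfl
  have e7 : (∑ k : ιoth, auxH P D lam μ θ k (y (Sum.inr k)))
        - (∑ k : ιoth, auxH P D lam μ θ k 0)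
      = (∑ kk : ιoth, (if Sum.inr kk ∈ D.K then
            D.a (Sum.inr kk) * y (Sum.inr kk) ^ 2 - D.a (Sum.inr kk) * 0 ^ 2 else 0))
        + (∑ kk : ιoth, (if Sum.inr kk ∈ D.L then
            D.b (Sum.inr kk) * y (Sum.inr kk) - D.b (Sum.inr kk) * 0 else 0))
        - μ * (∑ kk : ιoth, (if Sum.inr kk ∈ D.IL then
            Real.log (y (Sum.inr kk) - D.xL (Sum.inr kk))
              - Real.log ((0 : ℝ) - D.xL (Sum.inr kk)) else 0))
        - μ * (∑ kk : ιoth, (if Sum.inr kk ∈ D.IU then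
            Real.log (D.xU (Sum.inr kk) - y (Sum.inr kk))
              - Real.log (D.xU (Sum.inr kk) - (0 : ℝ)) else 0))
        + ∑ kk : ιoth,
          ((∑ r : Fin (N - 1) × Fin T, lam (Sum.inl (Sum.inl r)) *
              (if N ≤ (r.1 : ℕ) + 2 ∧ P.qN r.2 = kk then 1 else 0)) / P.dx * y (Sum.inr kk)
            + (∑ m : κ, lam (Sum.inr m) * D.Ac m θ (Sum.inr kk)) * y (Sum.inr kk)) := by
    rw [← Finset.sum_sub_distrib]
    simp only [Finset.mul_sum, ← Finset.sum_add_distrib, ← Finset.sum_sub_distrib]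
    apply Finset.sum_congr rfl
    intro kk _
    unfold auxH
    split_ifs <;> ring
  unfold lagrangian objective
  rw [e5]
  linear_combination e1 + e2 - μ * e3 - μ * e4 + hcon - e7

end Helpers3
section Helpers4

set_option linter.unusedSectionVars false

variable {N T : ℕ} {ιoth κ : Type} [Fintype ιoth] [DecidableEq ιoth] [Fintype κ]

/-- First derivative of `auxH k`. -/
noncomputable def auxHD (P : HydData N T ιoth) (D : OptData (OptIdx N T ιoth) κ)
    (lam : ConIdx N T κ → ℝ) (μ θ : ℝ) (k : ιoth) (t : ℝ) : ℝ :=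
  (if Sum.inr k ∈ D.K then D.a (Sum.inr k) * (2 * t) else 0)
  + (if Sum.inr k ∈ D.L then D.b (Sum.inr k) else 0)
  - μ * (if Sum.inr k ∈ D.IL then (t - D.xL (Sum.inr k))⁻¹ else 0)
  - μ * (if Sum.inr k ∈ D.IU then -(D.xU (Sum.inr k) - t)⁻¹ else 0)
  + (∑ m : κ, lam (Sum.inr m) * D.Ac m θ (Sum.inr k))
  + (∑ r : Fin (N - 1) × Fin T,
      lam (Sum.inl (Sum.inl r)) * (if N ≤ (r.1 : ℕ) + 2 ∧ P.qN r.2 = k then 1 else 0)) / P.dx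

/-- Second derivative of `auxH k`. -/
noncomputable def auxHDD (P : HydData N T ιoth) (D : OptData (OptIdx N T ιoth) κ)
    (μ : ℝ) (k : ιoth) (t : ℝ) : ℝ :=
  (if Sum.inr k ∈ D.K then D.a (Sum.inr k) * 2 else 0)
  + μ * (if Sum.inr k ∈ D.IL then ((t - D.xL (Sum.inr k)) ^ 2)⁻¹ else 0)
  + μ * (if Sum.inr k ∈ D.IU then ((D.xU (Sum.inr k) - t) ^ 2)⁻¹ else 0)

lemma aux_hasDerivH (P : HydData N T ιoth) (D : OptData (OptIdx N T ιoth) κ)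
    (lam : ConIdx N T κ → ℝ) (μ θ : ℝ) (k : ιoth) (t : ℝ)
    (hL : Sum.inr k ∈ D.IL → D.xL (Sum.inr k) < t)
    (hU : Sum.inr k ∈ D.IU → t < D.xU (Sum.inr k)) :
    HasDerivAt (auxH P D lam μ θ k) (auxHD P D lam μ θ k t) t := by
  have h1 : HasDerivAt (fun t : ℝ => if Sum.inr k ∈ D.K then D.a (Sum.inr k) * t ^ 2 else 0)
      (if Sum.inr k ∈ D.K then D.a (Sum.inr k) * (2 * t) else 0) t := by
    by_cases hc : Sum.inr k ∈ D.K
    · simp only [if_pos hc]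
      have := ((hasDerivAt_pow 2 t).const_mul (D.a (Sum.inr k)))
      refine this.congr_deriv ?_
      norm_num
    · simp only [if_neg hc]; exact hasDerivAt_const t 0
  have h2 : HasDerivAt (fun t : ℝ => if Sum.inr k ∈ D.L then D.b (Sum.inr k) * t else 0)
      (if Sum.inr k ∈ D.L then D.b (Sum.inr k) else 0) t := by
    by_cases hc : Sum.inr k ∈ D.L
    · simp only [if_pos hc]
      simpa using (hasDerivAt_id t).const_mul (D.b (Sum.inr k))
    · simp only [if_neg hc]; exact hasDerivAt_const t 0
  have h3 : HasDerivAt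
      (fun t : ℝ => if Sum.inr k ∈ D.IL then Real.log (t - D.xL (Sum.inr k)) else 0)
      (if Sum.inr k ∈ D.IL then (t - D.xL (Sum.inr k))⁻¹ else 0) t := by
    by_cases hc : Sum.inr k ∈ D.IL
    · simp only [if_pos hc]
      have hne : t - D.xL (Sum.inr k) ≠ 0 := ne_of_gt (sub_pos.2 (hL hc))
      have := ((hasDerivAt_id t).sub_const (D.xL (Sum.inr k))).log hne
      simpa [one_div] using this
    · simp only [if_neg hc]; exact hasDerivAt_const t 0
  have h4 : HasDerivAt
      (fun t : ℝ => if Sum.inr k ∈ D.IU then Real.log (D.xU (Sum.inr k) - t) else 0)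
      (if Sum.inr k ∈ D.IU then -(D.xU (Sum.inr k) - t)⁻¹ else 0) t := by
    by_cases hc : Sum.inr k ∈ D.IU
    · simp only [if_pos hc]
      have hne : D.xU (Sum.inr k) - t ≠ 0 := ne_of_gt (sub_pos.2 (hU hc))
      have := ((hasDerivAt_id t).const_sub (D.xU (Sum.inr k))).log hne
      refine this.congr_deriv ?_
      simp only [id_eq, div_eq_mul_inv]
      ring
    · simp only [if_neg hc]; exact hasDerivAt_const t 0
  have h5 : HasDerivAt
      (fun t : ℝ => (∑ m : κ, lam (Sum.inr m) * D.Ac m θ (Sum.inr k)) * t)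
      (∑ m : κ, lam (Sum.inr m) * D.Ac m θ (Sum.inr k)) t := by
    simpa using (hasDerivAt_id t).const_mul (∑ m : κ, lam (Sum.inr m) * D.Ac m θ (Sum.inr k))
  have h6 : HasDerivAt
      (fun t : ℝ => (∑ r : Fin (N - 1) × Fin T, lam (Sum.inl (Sum.inl r)) *
          (if N ≤ (r.1 : ℕ) + 2 ∧ P.qN r.2 = k then 1 else 0)) / P.dx * t)
      ((∑ r : Fin (N - 1) × Fin T, lam (Sum.inl (Sum.inl r)) *
          (if N ≤ (r.1 : ℕ) + 2 ∧ P.qN r.2 = k then 1 else 0)) / P.dx) t := by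
    simpa using (hasDerivAt_id t).const_mul ((∑ r : Fin (N - 1) × Fin T,
      lam (Sum.inl (Sum.inl r)) * (if N ≤ (r.1 : ℕ) + 2 ∧ P.qN r.2 = k then 1 else 0)) / P.dx)
  exact ((((h1.add h2).sub (h3.const_mul μ)).sub (h4.const_mul μ)).add h5).add h6

lemma aux_hasDerivHD (P : HydData N T ιoth) (D : OptData (OptIdx N T ιoth) κ)
    (lam : ConIdx N T κ → ℝ) (μ θ : ℝ) (k : ιoth) (t : ℝ)
    (hL : Sum.inr k ∈ D.IL → D.xL (Sum.inr k) < t)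
    (hU : Sum.inr k ∈ D.IU → t < D.xU (Sum.inr k)) :
    HasDerivAt (auxHD P D lam μ θ k) (auxHDD P D μ k t) t := by
  have h1 : HasDerivAt (fun t : ℝ => if Sum.inr k ∈ D.K then D.a (Sum.inr k) * (2 * t) else 0)
      (if Sum.inr k ∈ D.K then D.a (Sum.inr k) * 2 else 0) t := by
    by_cases hc : Sum.inr k ∈ D.K
    · simp only [if_pos hc]
      simpa [mul_assoc] using ((hasDerivAt_id t).const_mul 2).const_mul (D.a (Sum.inr k))
    · simp only [if_neg hc]; exact hasDerivAt_const t 0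
  have h3 : HasDerivAt
      (fun t : ℝ => if Sum.inr k ∈ D.IL then (t - D.xL (Sum.inr k))⁻¹ else 0)
      (if Sum.inr k ∈ D.IL then -((t - D.xL (Sum.inr k)) ^ 2)⁻¹ else 0) t := by
    by_cases hc : Sum.inr k ∈ D.IL
    · simp only [if_pos hc]
      have hne : t - D.xL (Sum.inr k) ≠ 0 := ne_of_gt (sub_pos.2 (hL hc))
      have := ((hasDerivAt_id t).sub_const (D.xL (Sum.inr k))).inv hne
      refine this.congr_deriv ?_
      simp only [id_eq, div_eq_mul_inv]
      ring
    · simp only [if_neg hc]; exact hasDerivAt_const t 0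
  have h4 : HasDerivAt
      (fun t : ℝ => -(if Sum.inr k ∈ D.IU then (D.xU (Sum.inr k) - t)⁻¹ else 0))
      (-(if Sum.inr k ∈ D.IU then ((D.xU (Sum.inr k) - t) ^ 2)⁻¹ else 0)) t := by
    by_cases hc : Sum.inr k ∈ D.IU
    · simp only [if_pos hc]
      have hne : D.xU (Sum.inr k) - t ≠ 0 := ne_of_gt (sub_pos.2 (hU hc))
      have := (((hasDerivAt_id t).const_sub (D.xU (Sum.inr k))).inv hne).neg
      refine this.congr_deriv ?_
      simp only [id_eq, div_eq_mul_inv]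
      ring
    · simp only [if_neg hc, neg_zero]
      exact hasDerivAt_const t 0
  have hfun : auxHD P D lam μ θ k = fun t : ℝ =>
      ((((if Sum.inr k ∈ D.K then D.a (Sum.inr k) * (2 * t) else 0)
        + (if Sum.inr k ∈ D.L then D.b (Sum.inr k) else 0))
        - μ * (if Sum.inr k ∈ D.IL then (t - D.xL (Sum.inr k))⁻¹ else 0))
        - μ * (-(if Sum.inr k ∈ D.IU then (D.xU (Sum.inr k) - t)⁻¹ else 0)))
        + ((∑ m : κ, lam (Sum.inr m) * D.Ac m θ (Sum.inr k))
          + (∑ r : Fin (N - 1) × Fin T, lam (Sum.inl (Sum.inl r)) *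
              (if N ≤ (r.1 : ℕ) + 2 ∧ P.qN r.2 = k then 1 else 0)) / P.dx) := by
    funext s
    unfold auxHD
    split_ifs <;> ring
  have hsum : HasDerivAt (fun s : ℝ =>
      ((((if Sum.inr k ∈ D.K then D.a (Sum.inr k) * (2 * s) else 0)
        + (if Sum.inr k ∈ D.L then D.b (Sum.inr k) else 0))
        - μ * (if Sum.inr k ∈ D.IL then (s - D.xL (Sum.inr k))⁻¹ else 0))
        - μ * (-(if Sum.inr k ∈ D.IU then (D.xU (Sum.inr k) - s)⁻¹ else 0)))
        + ((∑ m : κ, lam (Sum.inr m) * D.Ac m θ (Sum.inr k))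
          + (∑ r : Fin (N - 1) × Fin T, lam (Sum.inl (Sum.inl r)) *
              (if N ≤ (r.1 : ℕ) + 2 ∧ P.qN r.2 = k then 1 else 0)) / P.dx))
      (((((if Sum.inr k ∈ D.K then D.a (Sum.inr k) * 2 else 0)
        + 0)
        - μ * (if Sum.inr k ∈ D.IL then -((t - D.xL (Sum.inr k)) ^ 2)⁻¹ else 0))
        - μ * (-(if Sum.inr k ∈ D.IU then ((D.xU (Sum.inr k) - t) ^ 2)⁻¹ else 0)))
        + 0) t :=
    ((((h1.add (hasDerivAt_const t _)).sub (h3.const_mul μ)).sub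
      (h4.const_mul μ)).add (hasDerivAt_const t _))
  rw [hfun]
  convert hsum using 1
  unfold auxHDD
  split_ifs <;> ring

lemma aux_HDD_pos (P : HydData N T ιoth) (D : OptData (OptIdx N T ιoth) κ) (μ : ℝ)
    (hμ : 0 < μ) (ha : ∀ k ∈ D.K, 0 < D.a k) (hbnd : D.IL ∪ D.IU = Finset.univ)
    (k : ιoth) (t : ℝ)
    (hL : Sum.inr k ∈ D.IL → D.xL (Sum.inr k) < t)
    (hU : Sum.inr k ∈ D.IU → t < D.xU (Sum.inr k)) :
    0 < auxHDD P D μ k t := by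
  have hmem : Sum.inr k ∈ D.IL ∪ D.IU := by
    rw [hbnd]; exact Finset.mem_univ _
  have h1 : 0 ≤ (if Sum.inr k ∈ D.K then D.a (Sum.inr k) * 2 else 0) := by
    split_ifs with hc
    · have := ha _ hc; linarith
    · exact le_refl 0
  have h2 : 0 ≤ μ * (if Sum.inr k ∈ D.IL then ((t - D.xL (Sum.inr k)) ^ 2)⁻¹ else 0) := by
    split_ifs with hc
    · positivity
    · simp
  have h3 : 0 ≤ μ * (if Sum.inr k ∈ D.IU then ((D.xU (Sum.inr k) - t) ^ 2)⁻¹ else 0) := by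
    split_ifs with hc
    · positivity
    · simp
  have h4 : 0 < μ * (if Sum.inr k ∈ D.IL then ((t - D.xL (Sum.inr k)) ^ 2)⁻¹ else 0)
      + μ * (if Sum.inr k ∈ D.IU then ((D.xU (Sum.inr k) - t) ^ 2)⁻¹ else 0) := by
    rcases Finset.mem_union.1 hmem with hc | hc
    · have hpos : 0 < μ * ((t - D.xL (Sum.inr k)) ^ 2)⁻¹ := by
        have := sub_pos.2 (hL hc); positivity
      rw [if_pos hc]; linarith
    · have hpos : 0 < μ * ((D.xU (Sum.inr k) - t) ^ 2)⁻¹ := by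
        have := sub_pos.2 (hU hc); positivity
      rw [if_pos hc]; linarith
  unfold auxHDD
  linarith

lemma aux_fderiv_comp_pi_zero {E F : Type*} [NormedAddCommGroup E] [NormedSpace ℝ E]
    [NormedAddCommGroup F] [NormedSpace ℝ F]
    (Fn : F → ℝ) (pr : E →L[ℝ] F) (x v : E) (hv : pr v = 0) :
    fderiv ℝ (fun y => Fn (pr y)) x v = 0 := by
  by_cases hd : DifferentiableAt ℝ (fun y => Fn (pr y)) x
  · have hline : HasDerivAt (fun t : ℝ => x + t • v) v 0 := by
      simpa using ((hasDerivAt_id (0 : ℝ)).smul_const v).const_add x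
    have h2 : HasDerivAt (fun t : ℝ => Fn (pr (x + t • v)))
        (fderiv ℝ (fun y => Fn (pr y)) x v) 0 :=
      hd.hasFDerivAt.comp_hasDerivAt_of_eq 0 hline (by simp)
    have h3 : (fun t : ℝ => Fn (pr (x + t • v))) = fun _ => Fn (pr x) := by
      funext t
      simp [map_add, map_smul, hv]
    rw [h3] at h2
    exact h2.unique (hasDerivAt_const 0 _)
  · rw [fderiv_zero_of_not_differentiableAt hd]
    rfl

end Helpers4
section Helpers5

set_option linter.unusedSectionVars false

variable {N T : ℕ} {ιoth κ : Type} [Fintype ιoth] [DecidableEq ιoth] [Fintype κ]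

lemma aux_diff_ext :
    Differentiable ℝ (auxExt : (HydIdx N T → ℝ) → (OptIdx N T ιoth → ℝ)) := by
  have : ∀ k : OptIdx N T ιoth,
      Differentiable ℝ (fun z : HydIdx N T → ℝ => auxExt (ιoth := ιoth) z k) := by
    intro k
    rcases k with kh | kk
    · simpa [auxExt] using differentiable_apply (𝕜 := ℝ) kh
    · simpa [auxExt] using differentiable_const (E := HydIdx N T → ℝ) (𝕜 := ℝ) (0 : ℝ)
  exact differentiable_pi.2 this

lemma aux_diffAt_Agen (P : HydData N T ιoth) (D : OptData (OptIdx N T ιoth) κ)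
    (fhyd : (HydIdx N T → ℝ) → ℝ → ℝ) (μ θ : ℝ) (lam : ConIdx N T κ → ℝ)
    (heps : 0 < P.eps)
    (hfd : Differentiable ℝ (fun xh : HydIdx N T → ℝ => fhyd xh θ))
    (z : HydIdx N T → ℝ)
    (hIL : ∀ kh : HydIdx N T, Sum.inl kh ∈ D.IL → D.xL (Sum.inl kh) < z kh)
    (hIU : ∀ kh : HydIdx N T, Sum.inl kh ∈ D.IU → z kh < D.xU (Sum.inl kh))
    (hAv : ∀ (k : Fin (N - 1)) (m : Fin T),
      P.Aval (auxExt (ιoth := ιoth) z) ((k : ℕ) + 1) (m : ℕ) ≠ 0) :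
    DifferentiableAt ℝ
      (fun z : HydIdx N T → ℝ => lagrangian P D fhyd μ θ (auxExt (ιoth := ιoth) z) lam) z := by
  unfold lagrangian objective
  have hext : ∀ w : HydIdx N T → ℝ, (auxExt (ιoth := ιoth) w) ∘ Sum.inl = w := fun _ => rfl
  simp only [hext]
  have hK : DifferentiableAt ℝ
      (fun z : HydIdx N T → ℝ => ∑ k ∈ D.K, D.a k * (auxExt (ιoth := ιoth) z k) ^ 2) z := by
    apply DifferentiableAt.fun_sum
    intro k _
    rcases k with kh | kk
    · simp only [auxExt, Sum.elim_inl]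
      exact ((differentiable_apply kh z).pow 2).const_mul _
    · simp only [auxExt, Sum.elim_inr, Pi.zero_apply]
      exact differentiableAt_const _
  have hL' : DifferentiableAt ℝ
      (fun z : HydIdx N T → ℝ => ∑ k ∈ D.L, D.b k * auxExt (ιoth := ιoth) z k) z := by
    apply DifferentiableAt.fun_sum
    intro k _
    rcases k with kh | kk
    · simp only [auxExt, Sum.elim_inl]
      exact (differentiable_apply kh z).const_mul _
    · simp only [auxExt, Sum.elim_inr, Pi.zero_apply]
      exact differentiableAt_const _
  have hILd : DifferentiableAt ℝ (fun z : HydIdx N T → ℝ =>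
      ∑ k ∈ D.IL, Real.log (auxExt (ιoth := ιoth) z k - D.xL k)) z := by
    apply DifferentiableAt.fun_sum
    intro k hk
    rcases k with kh | kk
    · simp only [auxExt, Sum.elim_inl]
      exact ((differentiable_apply kh z).sub_const _).log
        (sub_ne_zero.2 (ne_of_gt (hIL kh hk)))
    · simp only [auxExt, Sum.elim_inr, Pi.zero_apply]
      exact differentiableAt_const _
  have hIUd : DifferentiableAt ℝ (fun z : HydIdx N T → ℝ =>
      ∑ k ∈ D.IU, Real.log (D.xU k - auxExt (ιoth := ιoth) z k)) z := by
    apply DifferentiableAt.fun_sum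
    intro k hk
    rcases k with kh | kk
    · simp only [auxExt, Sum.elim_inl]
      exact ((differentiable_apply kh z).const_sub _).log
        (sub_ne_zero.2 (ne_of_gt (hIU kh hk)))
    · simp only [auxExt, Sum.elim_inr, Pi.zero_apply]
      exact differentiableAt_const _
  have hcon : DifferentiableAt ℝ (fun z : HydIdx N T → ℝ =>
      ∑ m : ConIdx N T κ, lam m * constraintFun P D θ m (auxExt (ιoth := ιoth) z)) z := by
    apply DifferentiableAt.fun_sum
    intro m _
    rcases m with (r | r) | mk
    · rcases r with ⟨k, m'⟩
      show DifferentiableAt ℝ (fun z : HydIdx N T → ℝ =>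
        lam (Sum.inl (Sum.inl (k, m'))) *
          P.massRes (auxExt (ιoth := ιoth) z) ((k : ℕ) + 2) ((m' : ℕ) + 1)) z
      exact ((diff_massRes P ((k : ℕ) + 2) ((m' : ℕ) + 1) (auxExt z)).comp z
        (aux_diff_ext z)).const_mul _
    · rcases r with ⟨k, m'⟩
      show DifferentiableAt ℝ (fun z : HydIdx N T → ℝ =>
        lam (Sum.inl (Sum.inr (k, m'))) *
          P.momRes θ (auxExt (ιoth := ιoth) z) ((k : ℕ) + 1) ((m' : ℕ) + 1)) z
      have hA : P.Aval (auxExt (ιoth := ιoth) z) ((k : ℕ) + 1) (((m' : ℕ) + 1) - 1) ≠ 0 :=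
        hAv k m'
      exact ((diffAt_momRes P heps θ ((k : ℕ) + 1) ((m' : ℕ) + 1) (auxExt z) hA).comp z
        (aux_diff_ext z)).const_mul _
    · show DifferentiableAt ℝ (fun z : HydIdx N T → ℝ =>
        lam (Sum.inr mk) *
          ((∑ i, D.Ac mk θ i * auxExt (ιoth := ιoth) z i) + D.bc mk θ)) z
      have hsum : DifferentiableAt ℝ (fun z : HydIdx N T → ℝ =>
          ∑ i, D.Ac mk θ i * auxExt (ιoth := ιoth) z i) z := by
        apply DifferentiableAt.fun_sum
        intro i _
        rcases i with kh | kk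
        · simp only [auxExt, Sum.elim_inl]
          exact (differentiable_apply kh z).const_mul _
        · simp only [auxExt, Sum.elim_inr, Pi.zero_apply]
          exact differentiableAt_const _
      exact (hsum.add_const _).const_mul _
  exact ((((hfd z).add hK).add hL').sub (hILd.const_mul μ)).sub (hIUd.const_mul μ) |>.add hcon

end Helpers5

set_option maxHeartbeats 1000000 in
/-- **Block structure of the Hessian of the barrier Lagrangian.**  Under BND, HBC, ICO, OBJ
and LIN, for every `θ ∈ [0,1]`, `μ > 0`, multiplier vector `λ` and point `x` strictly
between its bounds, the Hessian `∇²_{xx} L_μ(x,λ,θ)` is block diagonal with respect to the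
splitting `x = (x_hyd, x_oth)`: the mixed blocks vanish, and the `(x_oth, x_oth)` block is a
diagonal matrix with strictly positive diagonal entries (in particular nonsingular). -/
theorem hessian_block_structure
    {N T : ℕ} {ιoth κ : Type} [Fintype ιoth] [DecidableEq ιoth] [Fintype κ]
    (P : HydData N T ιoth) (D : OptData (OptIdx N T ιoth) κ)
    (fhyd : (HydIdx N T → ℝ) → ℝ → ℝ)
    (hN : 2 ≤ N) (hT : 1 ≤ T)
    (hg : 0 < P.g) (hw : 0 < P.w) (hdx : 0 < P.dx) (hdt : 0 < P.dt) (hC : 0 < P.C)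
    (heps : 0 < P.eps) (hAbar : 0 < P.Abar) (hPbar : 0 < P.Pbar)
    (hqN : Function.Injective P.qN)
    -- (BND): every variable is bounded below, above, or both, and the interior level
    -- variables have lower bounds no less than the bottom level `H_b`
    (hbnd : D.IL ∪ D.IU = Finset.univ)
    (hHlb : ∀ p : Fin (N - 1) × Fin T,
      Sum.inl (Sum.inl p) ∈ D.IL ∧ P.Hb ≤ D.xL (Sum.inl (Sum.inl p)))
    -- (ICO): the fixed initial levels exceed the bottom level
    (hico : ∀ i, 1 ≤ i → i ≤ N → P.Hb < P.H0 i)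
    -- (HBC): the fixed boundary levels exceed the bottom level
    (hhbc : ∀ j, 1 ≤ j → j ≤ T → P.Hb < P.Hbd j)
    -- (OBJ): `f_hyd` is a smooth function of the interior hydraulic variables, and the
    -- quadratic coefficients are positive
    (hsmooth : ∀ θ : ℝ, ContDiff ℝ (⊤ : ℕ∞) (fun xh : HydIdx N T → ℝ => fhyd xh θ))
    (ha : ∀ k ∈ D.K, 0 < D.a k)
    -- the data of the claim
    (θ : ℝ) (hθ : θ ∈ Set.Icc (0 : ℝ) 1) (μ : ℝ) (hμ : 0 < μ)
    (lam : ConIdx N T κ → ℝ) (x : OptIdx N T ιoth → ℝ)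
    (hxL : ∀ k ∈ D.IL, D.xL k < x k) (hxU : ∀ k ∈ D.IU, x k < D.xU k) :
    (∀ (kh : HydIdx N T) (ko : ιoth),
        hessLag P D fhyd μ θ x lam (Sum.inl kh) (Sum.inr ko) = 0
        ∧ hessLag P D fhyd μ θ x lam (Sum.inr ko) (Sum.inl kh) = 0)
    ∧ (∀ k₁ k₂ : ιoth, k₁ ≠ k₂ →
        hessLag P D fhyd μ θ x lam (Sum.inr k₁) (Sum.inr k₂) = 0)
    ∧ (∀ k : ιoth, 0 < hessLag P D fhyd μ θ x lam (Sum.inr k) (Sum.inr k)) := by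
  classical
  -- the projection on the hydraulic variables, as a continuous linear map
  set πc : ((OptIdx N T ιoth → ℝ) →L[ℝ] (HydIdx N T → ℝ)) :=
    ContinuousLinearMap.pi (fun kh : HydIdx N T =>
      ContinuousLinearMap.proj (Sum.inl kh)) with hπc
  have hπapp : ∀ (y : OptIdx N T ιoth → ℝ), πc y = fun kh => y (Sum.inl kh) :=
    fun y => rfl
  -- the `x_oth`-block component functions and the hyd function
  set Agen : (HydIdx N T → ℝ) → ℝ := fun zz =>
    lagrangian P D fhyd μ θ (auxExt (ιoth := ιoth) zz) lam
      - ∑ k : ιoth, auxH P D lam μ θ k 0 with hAgen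
  set Sf : (OptIdx N T ιoth → ℝ) → ℝ := fun y =>
    ∑ k : ιoth, auxH P D lam μ θ k (y (Sum.inr k)) with hSf
  have hdec : (fun yy => lagrangian P D fhyd μ θ yy lam)
      = fun yy => Agen (πc yy) + Sf yy := by
    funext yy
    rw [hAgen, hSf, hπapp]
    exact aux_decomp P D fhyd μ θ lam yy
  -- positivity of interior levels under the bound condition
  have hHx : ∀ (y : OptIdx N T ιoth → ℝ), (∀ k ∈ D.IL, D.xL k < y k) →
      ∀ i j, 1 ≤ i → i ≤ N → j ≤ T → P.Hb < P.Hval y i j := by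
    intro y hyL i j h1 h2 h3
    unfold HydData.Hval
    by_cases hj : j = 0
    · simp only [if_pos hj]; exact hico i h1 h2
    by_cases hi : i ≤ 1
    · simp only [if_neg hj, if_pos hi]; exact hhbc j (by omega) h3
    have hcond : i - 2 < N - 1 ∧ j - 1 < T := by omega
    simp only [if_neg hj, if_neg hi, dif_pos hcond]
    calc P.Hb ≤ D.xL (Sum.inl (Sum.inl (⟨i - 2, hcond.1⟩, ⟨j - 1, hcond.2⟩))) :=
          (hHlb _).2
      _ < y _ := hyL _ (hHlb _).1
  have hApos : ∀ (y : OptIdx N T ιoth → ℝ), (∀ k ∈ D.IL, D.xL k < y k) →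
      ∀ (k : Fin (N - 1)) (m : Fin T), 0 < P.Aval y ((k : ℕ) + 1) (m : ℕ) := by
    intro y hyL k m
    have hk := k.isLt
    have hm := m.isLt
    have h1 := hHx y hyL ((k : ℕ) + 1) (m : ℕ) (by omega) (by omega) (by omega)
    have h2 := hHx y hyL ((k : ℕ) + 1 + 1) (m : ℕ) (by omega) (by omega) (by omega)
    unfold HydData.Aval
    have hS : (0 : ℝ) < P.Hval y ((k : ℕ) + 1) (m : ℕ)
        + P.Hval y ((k : ℕ) + 1 + 1) (m : ℕ) - 2 * P.Hb := by linarith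
    have := mul_pos (by linarith : (0 : ℝ) < P.w / 2) hS
    exact this
  -- the set of points near x where everything is differentiable
  have hEv : ∀ᶠ y in nhds x,
      ((∀ k ∈ D.IL, D.xL k < y k) ∧ (∀ k ∈ D.IU, y k < D.xU k)) := by
    have hL' : ∀ᶠ y in nhds x, ∀ k ∈ D.IL, D.xL k < y k := by
      rw [Filter.eventually_all_finset]
      intro k hk
      exact ContinuousAt.eventually_lt continuousAt_const
        (continuous_apply k).continuousAt (hxL k hk)
    have hU' : ∀ᶠ y in nhds x, ∀ k ∈ D.IU, y k < D.xU k := by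
      rw [Filter.eventually_all_finset]
      intro k hk
      exact ContinuousAt.eventually_lt (continuous_apply k).continuousAt
        continuousAt_const (hxU k hk)
    exact hL'.and hU'
  -- differentiability of the hydraulic part
  have hAdiff : ∀ (y : OptIdx N T ιoth → ℝ),
      ((∀ k ∈ D.IL, D.xL k < y k) ∧ (∀ k ∈ D.IU, y k < D.xU k)) →
      DifferentiableAt ℝ Agen (πc y) := by
    intro y hy
    rw [hAgen, hπapp]
    apply DifferentiableAt.sub_const
    apply aux_diffAt_Agen P D fhyd μ θ lam heps
      (((hsmooth θ).differentiable (by simp)))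
    · intro kh hk; exact hy.1 _ hk
    · intro kh hk; exact hy.2 _ hk
    · intro k m
      rw [aux_Aval_pi P y ((k : ℕ) + 1) (m : ℕ)]
      exact ne_of_gt (hApos y hy.1 k m)
  -- derivative of the separable part
  have hSder : ∀ (y : OptIdx N T ιoth → ℝ),
      ((∀ k ∈ D.IL, D.xL k < y k) ∧ (∀ k ∈ D.IU, y k < D.xU k)) →
      HasFDerivAt Sf (∑ k : ιoth, (auxHD P D lam μ θ k (y (Sum.inr k))) •
        (ContinuousLinearMap.proj (Sum.inr k) :
          (OptIdx N T ιoth → ℝ) →L[ℝ] ℝ)) y := by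
    intro y hy
    rw [hSf]
    apply HasFDerivAt.fun_sum
    intro k _
    exact (aux_hasDerivH P D lam μ θ k (y (Sum.inr k))
      (fun hc => hy.1 _ hc) (fun hc => hy.2 _ hc)).comp_hasFDerivAt y
      (hasFDerivAt_apply (𝕜 := ℝ) (Sum.inr k) y)
  -- full derivative of the Lagrangian near x
  have hLam : ∀ (y : OptIdx N T ιoth → ℝ),
      ((∀ k ∈ D.IL, D.xL k < y k) ∧ (∀ k ∈ D.IU, y k < D.xU k)) →
      HasFDerivAt (fun yy => lagrangian P D fhyd μ θ yy lam)
        ((fderiv ℝ Agen (πc y)).comp πc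
          + ∑ k : ιoth, (auxHD P D lam μ θ k (y (Sum.inr k))) •
            (ContinuousLinearMap.proj (Sum.inr k) :
              (OptIdx N T ιoth → ℝ) →L[ℝ] ℝ)) y := by
    intro y hy
    rw [hdec]
    exact ((hAdiff y hy).hasFDerivAt.comp y πc.hasFDerivAt).add (hSder y hy)
  -- the key vanishing of the projection on `x_oth` directions
  have hπzero : ∀ ko : ιoth, πc (Pi.single (Sum.inr ko) 1) = 0 := by
    intro ko
    rw [hπapp]
    funext kh
    exact Pi.single_eq_of_ne (by simp) 1
  -- gradient formula in `x_oth` directions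
  have hgrad_r : ∀ ko : ιoth,
      (fun y => fderiv ℝ (fun z => lagrangian P D fhyd μ θ z lam) y
          (Pi.single (Sum.inr ko) 1))
        =ᶠ[nhds x] fun y => auxHD P D lam μ θ ko (y (Sum.inr ko)) := by
    intro ko
    filter_upwards [hEv] with y hy
    rw [(hLam y hy).fderiv]
    rw [ContinuousLinearMap.add_apply, ContinuousLinearMap.comp_apply, hπzero ko,
      map_zero, zero_add, ContinuousLinearMap.sum_apply]
    simp only [ContinuousLinearMap.smul_apply, ContinuousLinearMap.proj_apply,
      smul_eq_mul, Pi.single_apply, Sum.inr.injEq, mul_ite, mul_one, mul_zero]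
    rw [Finset.sum_ite_eq' Finset.univ ko]
    simp
  -- gradient formula in hydraulic directions
  have hπsingle : ∀ kh : HydIdx N T,
      πc (Pi.single (Sum.inl kh) 1) = Pi.single kh 1 := by
    intro kh
    rw [hπapp]
    funext kh'
    simp [Pi.single_apply]
  have hgrad_l : ∀ kh : HydIdx N T,
      (fun y => fderiv ℝ (fun z => lagrangian P D fhyd μ θ z lam) y
          (Pi.single (Sum.inl kh) 1))
        =ᶠ[nhds x] fun y => fderiv ℝ Agen (πc y) (Pi.single kh 1) := by
    intro kh
    filter_upwards [hEv] with y hy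
    rw [(hLam y hy).fderiv]
    rw [ContinuousLinearMap.add_apply, ContinuousLinearMap.comp_apply, hπsingle kh,
      ContinuousLinearMap.sum_apply]
    have hz : (∑ k : ιoth, ((auxHD P D lam μ θ k (y (Sum.inr k))) •
        (ContinuousLinearMap.proj (Sum.inr k) :
          (OptIdx N T ιoth → ℝ) →L[ℝ] ℝ)) (Pi.single (Sum.inl kh) 1)) = 0 := by
      apply Finset.sum_eq_zero
      intro k _
      simp [Pi.single_apply]
    rw [hz, add_zero]
  -- the second derivative of the separable part at x
  have houter : ∀ ko : ιoth,
      HasFDerivAt (fun y : OptIdx N T ιoth → ℝ => auxHD P D lam μ θ ko (y (Sum.inr ko)))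
        ((auxHDD P D μ ko (x (Sum.inr ko))) •
          (ContinuousLinearMap.proj (Sum.inr ko) :
            (OptIdx N T ιoth → ℝ) →L[ℝ] ℝ)) x := by
    intro ko
    exact (aux_hasDerivHD P D lam μ θ ko (x (Sum.inr ko))
      (fun hc => hxL _ hc) (fun hc => hxU _ hc)).comp_hasFDerivAt x
      (hasFDerivAt_apply (𝕜 := ℝ) (Sum.inr ko) x)
  refine ⟨?_, ?_, ?_⟩
  · intro kh ko
    constructor
    · unfold hessLag
      rw [Filter.EventuallyEq.fderiv_eq (hgrad_r ko), (houter ko).fderiv]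
      simp [Pi.single_apply]
    · unfold hessLag
      rw [Filter.EventuallyEq.fderiv_eq (hgrad_l kh)]
      exact aux_fderiv_comp_pi_zero (fun z => fderiv ℝ Agen z (Pi.single kh 1)) πc x
        (Pi.single (Sum.inr ko) 1) (hπzero ko)
  · intro k₁ k₂ hne
    unfold hessLag
    rw [Filter.EventuallyEq.fderiv_eq (hgrad_r k₂), (houter k₂).fderiv]
    simp only [ContinuousLinearMap.smul_apply, ContinuousLinearMap.proj_apply,
      smul_eq_mul, Pi.single_apply, Sum.inr.injEq]
    rw [if_neg (Ne.symm hne)]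
    simp
  · intro k
    unfold hessLag
    rw [Filter.EventuallyEq.fderiv_eq (hgrad_r k), (houter k).fderiv]
    simp only [ContinuousLinearMap.smul_apply, ContinuousLinearMap.proj_apply,
      smul_eq_mul, Pi.single_eq_same, mul_one]
    exact aux_HDD_pos P D μ hμ ha hbnd k (x (Sum.inr k))
      (fun hc => hxL _ hc) (fun hc => hxU _ hc)
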